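/- arXiv:1509.06356 — 5 statements merged into one kernel-verified Lean document; each statement's English description precedes it below -/
import Mathlib

section
/- Let R be a commutative ring with unity, Γ an ordered abelian group, and Γ' a submonoid of Γ ∪ {∞}. Suppose Γ' is endowed with a topology such that (P1) addition Γ' × Γ' → Γ' is continuous, and (P2) for all γ, γ' ∈ Γ' with γ < γ' there exist open sets U, U' with γ ∈ U, γ' ∈ U', and u < u' for all u ∈ U, u' ∈ U'. Then the set of all valuations of R taking values in Γ' is a closed subset of the product space (Γ')^R. -/
/-!
(P2) makes `≤` a closed relation on `Γ'`, so `Γ'` is Hausdorff. Each valuation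
axiom then involves only finitely many coordinates and is a closed condition: equalities between
continuous maps (using (P1) for `f a + f b`), an inequality between continuous maps, and
`f 0 ∈ {∞} ∩ Γ'`, a set with at most one point.
-/

/-- A valuation on a commutative ring `R` with values in a submonoid `Γ'` of `Γ ∪ {∞}`. -/
def IsValuationOn {R : Type*} [CommRing R] {Γ : Type*} [AddCommGroup Γ] [LinearOrder Γ] [IsOrderedAddMonoid Γ]
    (Γ' : AddSubmonoid (WithTop Γ)) (f : R → Γ') : Prop :=
  (∀ a b : R, (f (a * b) : WithTop Γ) = (f a : WithTop Γ) + (f b : WithTop Γ)) ∧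
  (∀ a b : R, min (f a : WithTop Γ) (f b : WithTop Γ) ≤ (f (a + b) : WithTop Γ)) ∧
  (f 1 : WithTop Γ) = 0 ∧ (f 0 : WithTop Γ) = ⊤

theorem OrderClosedTopology.of_separated {α : Type*} [TopologicalSpace α] [LinearOrder α]
    (h : ∀ x y : α, x < y → ∃ U V : Set α, IsOpen U ∧ IsOpen V ∧ x ∈ U ∧ y ∈ V ∧
      ∀ u ∈ U, ∀ v ∈ V, u < v) :
    OrderClosedTopology α where
  isClosed_le' := by
    refine isOpen_compl_iff.mp (isOpen_iff_forall_mem_open.mpr ?_)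
    rintro ⟨x, y⟩ hyx
    obtain ⟨U, V, hU, hV, hyU, hxV, hUV⟩ := h y x (not_le.mp hyx)
    exact ⟨V ×ˢ U, fun p hp => not_le.mpr (hUV p.2 hp.2 p.1 hp.1), hV.prod hU, hxV, hyU⟩

section

variable {R : Type*} [CommRing R] {Γ : Type*} [AddCommGroup Γ] [LinearOrder Γ]
  [IsOrderedAddMonoid Γ] {Γ' : AddSubmonoid (WithTop Γ)}

theorem isValuationOn_iff (f : R → Γ') :
    IsValuationOn Γ' f ↔ (∀ a b, f (a * b) = f a + f b) ∧ (∀ a b, min (f a) (f b) ≤ f (a + b)) ∧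
      f 1 = 0 ∧ f 0 ∈ {x : Γ' | (x : WithTop Γ) = ⊤} := by
  simp only [IsValuationOn, Subtype.ext_iff, AddSubmonoid.coe_add, AddSubmonoid.coe_zero,
    ← Subtype.coe_le_coe, (Subtype.mono_coe (· ∈ Γ')).map_min, Set.mem_ofPred_eq]

theorem isClosed_setOf_isValuationOn [TopologicalSpace Γ'] [ContinuousAdd Γ']
    [OrderClosedTopology Γ'] : IsClosed {f : R → Γ' | IsValuationOn Γ' f} := by
  simp only [isValuationOn_iff, Set.ofPred_and, Set.ofPred_forall]
  refine .inter ?_ (.inter ?_ (.inter ?_ ?_))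
  · exact isClosed_iInter fun a => isClosed_iInter fun b =>
      isClosed_eq (continuous_apply _) ((continuous_apply a).add (continuous_apply b))
  · exact isClosed_iInter fun a => isClosed_iInter fun b =>
      isClosed_le ((continuous_apply a).min (continuous_apply b)) (continuous_apply _)
  · exact isClosed_eq (continuous_apply 1) continuous_const
  · have htop : ({x : Γ' | (x : WithTop Γ) = ⊤} : Set Γ').Subsingleton :=
      fun x hx y hy => Subtype.ext (hx.trans hy.symm)
    exact htop.isClosed.preimage (continuous_apply 0)

end

theorem stmt0 {R : Type*} [CommRing R] {Γ : Type*} [AddCommGroup Γ] [LinearOrder Γ] [IsOrderedAddMonoid Γ]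
    (Γ' : AddSubmonoid (WithTop Γ)) [TopologicalSpace Γ']
    (hP1 : Continuous fun p : Γ' × Γ' => p.1 + p.2)
    (hP2 : ∀ γ γ' : Γ', γ < γ' → ∃ U U' : Set Γ', IsOpen U ∧ IsOpen U' ∧ γ ∈ U ∧ γ' ∈ U' ∧
      ∀ u ∈ U, ∀ u' ∈ U', u < u') :
    IsClosed {f : R → Γ' | IsValuationOn Γ' f} :=
  have : ContinuousAdd Γ' := ⟨hP1⟩
  have : OrderClosedTopology Γ' := .of_separated hP2
  isClosed_setOf_isValuationOn
end

section
/- Let X be a totally ordered set and X_∞ = X ∪ {∞}. The order topology on X_∞ is finer than or equal to the circle topology on X_∞; moreover the two topologies are equal if and only if X has a smallest element. -/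
/-!
In `WithTop X` the circle generators at `⊤` are the order-open sets `Iio x₀ ∪ Ioi x₁`, and `X` is
an open subspace carrying its order topology, so the order topology is finer. Conversely every
circle-open set containing `⊤` contains some `Iio x₀ ∪ Ioi x₁`; if the order-open ray `Ioi x` is
circle-open this gives `Iio x₀ ⊆ Ioi x`, which forces `min x₀ x` to be the least element of `X`.
With a least element `m`, the ray `Ioi y = Iio m ∪ Ioi y` is a circle generator, and the rays
`Iio a` lie in `X`, so the topologies coincide.
-/

open Set TopologicalSpace Topology

/-- The circle topology on `X ∪ {∞}`: it extends the order topology of `X` and has the sets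
`{∞} ∪ (X \ [x₀, x₁])` as a neighbourhood basis at `∞`. -/
def circleTopology (X : Type*) [LinearOrder X] : TopologicalSpace (WithTop X) :=
  TopologicalSpace.generateFrom
    ({ s : Set (WithTop X) | ∃ u : Set X, (Preorder.topology X).IsOpen u ∧ s = (↑) '' u } ∪
     { s : Set (WithTop X) | ∃ x₀ x₁ : X, s = insert ⊤ ((↑) '' (Set.Icc x₀ x₁)ᶜ) })

lemma isBot_min_of_Iio_subset_Ioi {α : Type*} [LinearOrder α] {a b : α}
    (h : Iio a ⊆ Ioi b) : IsBot (min a b) := by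
  intro z
  by_contra! hz
  exact (lt_min_iff.1 hz).2.not_gt (h (lt_min_iff.1 hz).1)

namespace WithTop

variable {X : Type*} [LinearOrder X]

lemma insert_top_image_coe_compl_Icc (x₀ x₁ : X) :
    insert (⊤ : WithTop X) ((↑) '' (Icc x₀ x₁)ᶜ) = Iio (x₀ : WithTop X) ∪ Ioi (x₁ : WithTop X) := by
  ext z
  induction z using WithTop.recTopCoe <;> simp [or_iff_not_imp_left]

end WithTop

namespace circleTopology

variable {X : Type*} [LinearOrder X]

lemma isOpen_image_coe {u : Set X} (hu : IsOpen[Preorder.topology X] u) :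
    IsOpen[circleTopology X] ((↑) '' u) :=
  isOpen_generateFrom_of_mem (Or.inl ⟨u, hu, rfl⟩)

lemma isOpen_Iio_union_Ioi (x₀ x₁ : X) :
    IsOpen[circleTopology X] (Iio (x₀ : WithTop X) ∪ Ioi (x₁ : WithTop X)) :=
  WithTop.insert_top_image_coe_compl_Icc x₀ x₁ ▸
    isOpen_generateFrom_of_mem (Or.inr ⟨x₀, x₁, rfl⟩)

lemma exists_Iio_union_Ioi_subset [Nonempty X] {s : Set (WithTop X)}
    (hs : IsOpen[circleTopology X] s) (htop : ⊤ ∈ s) :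
    ∃ x₀ x₁ : X, Iio (x₀ : WithTop X) ∪ Ioi (x₁ : WithTop X) ⊆ s := by
  induction hs with
  | basic t ht =>
    rcases ht with ⟨u, -, rfl⟩ | ⟨x₀, x₁, rfl⟩
    · simp at htop
    · exact ⟨x₀, x₁, (WithTop.insert_top_image_coe_compl_Icc x₀ x₁).ge⟩
  | univ =>
    obtain ⟨x⟩ := ‹Nonempty X›
    exact ⟨x, x, subset_univ _⟩
  | inter s t _ _ ihs iht =>
    obtain ⟨a₀, a₁, ha⟩ := ihs htop.1
    obtain ⟨b₀, b₁, hb⟩ := iht htop.2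
    refine ⟨min a₀ b₀, max a₁ b₁, subset_inter ?_ ?_⟩
    · exact (union_subset_union (Iio_subset_Iio (by simp)) (Ioi_subset_Ioi (by simp))).trans ha
    · exact (union_subset_union (Iio_subset_Iio (by simp)) (Ioi_subset_Ioi (by simp))).trans hb
  | sUnion S _ ih =>
    obtain ⟨t, htS, htop⟩ := htop
    obtain ⟨x₀, x₁, hsub⟩ := ih t htS htop
    exact ⟨x₀, x₁, hsub.trans (subset_sUnion_of_mem htS)⟩

lemma preorderTopology_le : Preorder.topology (WithTop X) ≤ circleTopology X := by
  let := Preorder.topology X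
  have : OrderTopology X := ⟨rfl⟩
  refine le_generateFrom ?_
  rintro _ (⟨u, hu, rfl⟩ | ⟨x₀, x₁, rfl⟩)
  · exact WithTop.isOpenEmbedding_coe.isOpenMap u hu
  · rw [WithTop.insert_top_image_coe_compl_Icc]
    exact isOpen_Iio.union isOpen_Ioi

lemma le_preorderTopology {m : X} (hm : IsBot m) :
    circleTopology X ≤ Preorder.topology (WithTop X) := by
  let := Preorder.topology X
  have : OrderTopology X := ⟨rfl⟩
  refine le_generateFrom ?_
  rintro _ ⟨a, rfl | rfl⟩
  · cases a with
    | top => simp [@isOpen_empty _ (circleTopology X)]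
    | coe y =>
      have hbot : Iio (m : WithTop X) = ∅ := by
        ext z
        induction z using WithTop.recTopCoe <;> simp [hm _]
      simpa [hbot] using isOpen_Iio_union_Ioi m y
  · have hrange : Iio a ⊆ range ((↑) : X → WithTop X) :=
      WithTop.range_coe (α := X) ▸ Iio_subset_Iio le_top
    rw [← image_preimage_eq_of_subset hrange]
    exact isOpen_image_coe (isOpen_Iio.preimage WithTop.continuous_coe)

lemma isBot_of_preorderTopology_eq [Nonempty X]
    (h : Preorder.topology (WithTop X) = circleTopology X) : ∃ m : X, IsBot m := by
  obtain ⟨x⟩ := ‹Nonempty X›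
  have hopen : IsOpen[circleTopology X] (Ioi (x : WithTop X)) :=
    h ▸ isOpen_generateFrom_of_mem ⟨(x : WithTop X), Or.inl rfl⟩
  obtain ⟨x₀, _, hsub⟩ := exists_Iio_union_Ioi_subset hopen (WithTop.coe_lt_top x)
  have := isBot_min_of_Iio_subset_Ioi (subset_union_left.trans hsub)
  exact ⟨min x₀ x, fun z => WithTop.coe_le_coe.1 (this z)⟩

end circleTopology

theorem stmt7 {X : Type*} [LinearOrder X] [Nonempty X] :
    (∀ s : Set (WithTop X), (circleTopology X).IsOpen s →
      (Preorder.topology (WithTop X)).IsOpen s) ∧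
    (Preorder.topology (WithTop X) = circleTopology X ↔ ∃ m : X, ∀ x : X, m ≤ x) :=
  ⟨circleTopology.preorderTopology_le,
    circleTopology.isBot_of_preorderTopology_eq,
    fun ⟨_, hm⟩ =>
      circleTopology.preorderTopology_le.antisymm (circleTopology.le_preorderTopology hm)⟩
end

section
/- Let X be a totally ordered set and X_∞ = X ∪ {∞}. The circle topology on X_∞ is finer than or equal to the one-point compactification topology on X_∞ (where X carries its order topology); moreover they are equal if and only if X is complete (every nonempty subset bounded above has a supremum). -/
/-- The one-point compactification topology on `X ∪ {∞}`, where `X` carries the order topology: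
its open sets are the open subsets of `X` together with the sets `{∞} ∪ (X \ K)` for
`K ⊆ X` closed and compact. -/
def onePointCompTopology (X : Type*) [LinearOrder X] : TopologicalSpace (WithTop X) :=
  TopologicalSpace.generateFrom
    ({ s : Set (WithTop X) | ∃ u : Set X, (Preorder.topology X).IsOpen u ∧ s = (↑) '' u } ∪
     { s : Set (WithTop X) | ∃ K : Set X, @IsClosed X (Preorder.topology X) K ∧
        @IsCompact X (Preorder.topology X) K ∧ s = insert ⊤ ((↑) '' Kᶜ) })

open Set Topology TopologicalSpace

section CompleteLinearOrder

variable {X : Type*} [LinearOrder X]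

open Classical in
noncomputable abbrev ConditionallyCompleteLinearOrder.ofExistsIsLUB [Nonempty X]
    (h : ∀ S : Set X, S.Nonempty → BddAbove S → ∃ x, IsLUB S x) :
    ConditionallyCompleteLinearOrder X :=
  letI : SupSet X := ⟨fun S ↦
    if hS : S.Nonempty ∧ BddAbove S then (h S hS.1 hS.2).choose else Classical.arbitrary X⟩
  letI : InfSet X := ⟨fun S ↦
    if hS : S.Nonempty ∧ BddBelow S then sSup (lowerBounds S) else Classical.arbitrary X⟩
  have isLUB_sSup (S : Set X) (hne : S.Nonempty) (hbdd : BddAbove S) : IsLUB S (sSup S) := by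
    change IsLUB S (dite _ _ _)
    rw [dif_pos ⟨hne, hbdd⟩]
    exact (h S hne hbdd).choose_spec
  { ‹LinearOrder X›, LinearOrder.toLattice with
    isLUB_csSup := isLUB_sSup
    isGLB_csInf := fun S hne hbdd ↦ by
      change IsGLB S (dite _ _ _)
      rw [dif_pos ⟨hne, hbdd⟩, ← isLUB_lowerBounds]
      exact isLUB_sSup _ hbdd hne.bddAbove_lowerBounds
    csSup_of_not_bddAbove := fun S hS ↦ by
      change dite _ _ _ = dite _ _ _
      rw [dif_neg (hS ·.2), dif_neg (by simp)]
    csInf_of_not_bddBelow := fun S hS ↦ by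
      change dite _ _ _ = dite _ _ _
      rw [dif_neg (hS ·.2), dif_neg (by simp)] }

variable [TopologicalSpace X]

theorem isClosed_upperBounds [ClosedIciTopology X] (S : Set X) : IsClosed (upperBounds S) := by
  convert isClosed_biInter fun x (_ : x ∈ S) ↦ isClosed_Ici (a := x)
  ext
  simp [upperBounds]

variable [OrderTopology X]

theorem forall_isCompact_Icc_iff_exists_isLUB :
    (∀ a b : X, IsCompact (Icc a b)) ↔ ∀ S : Set X, S.Nonempty → BddAbove S → ∃ x, IsLUB S x := by
  constructor
  · rintro hIcc S ⟨s, hs⟩ ⟨b, hb⟩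
    have hK : IsCompact (upperBounds S ∩ Icc s b) :=
      (hIcc s b).of_isClosed_subset ((isClosed_upperBounds S).inter isClosed_Icc) inter_subset_right
    obtain ⟨x, hx, hleast⟩ := hK.exists_isLeast ⟨b, hb, hb hs, le_rfl⟩
    refine ⟨x, hx.1, fun y hy ↦ (hleast ?_).trans (min_le_left y b)⟩
    exact ⟨fun z hz ↦ le_min (hy hz) (hb hz), le_min (hy hs) (hb hs), min_le_right y b⟩
  · intro h a b
    have : Nonempty X := ⟨a⟩
    let _ := ConditionallyCompleteLinearOrder.ofExistsIsLUB h
    exact ConditionallyCompleteLinearOrder.isCompact_Icc a b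

end CompleteLinearOrder

section OnePointCompactification

variable {X : Type*} [LinearOrder X]

theorem circleTopology_le_onePointCompTopology : circleTopology X ≤ onePointCompTopology X := by
  let _ := Preorder.topology X
  have : OrderTopology X := ⟨rfl⟩
  let _ := circleTopology X
  refine le_generateFrom ?_
  rintro s (⟨u, hu, rfl⟩ | ⟨K, hKclosed, hKcompact, rfl⟩)
  · exact .basic _ (Or.inl ⟨u, hu, rfl⟩)
  rcases K.eq_empty_or_nonempty with rfl | hKne
  · simp [WithTop.range_coe]
  obtain ⟨a, ha⟩ := hKcompact.exists_isLeast hKne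
  obtain ⟨b, hb⟩ := hKcompact.exists_isGreatest hKne
  have hunion : insert ⊤ (((↑) : X → WithTop X) '' Kᶜ) =
      insert ⊤ ((↑) '' (Icc a b)ᶜ) ∪ (↑) '' Kᶜ := by
    have : (Icc a b)ᶜ ⊆ Kᶜ := compl_subset_compl.2 fun x hx ↦ ⟨ha.2 hx, hb.2 hx⟩
    rw [insert_union, union_eq_right.2 (image_mono this)]
  have hIcc : IsOpen (insert ⊤ (((↑) : X → WithTop X) '' (Icc a b)ᶜ)) :=
    .basic _ (Or.inr ⟨a, b, rfl⟩)
  have hK : IsOpen (((↑) : X → WithTop X) '' Kᶜ) :=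
    .basic _ (Or.inl ⟨Kᶜ, hKclosed.isOpen_compl, rfl⟩)
  exact hunion ▸ hIcc.union hK

theorem exists_isCompact_insert_top_subset {s : Set (WithTop X)}
    (hs : IsOpen[onePointCompTopology X] s) (htop : ⊤ ∈ s) :
    ∃ K : Set X, @IsCompact X (Preorder.topology X) K ∧ insert ⊤ ((↑) '' Kᶜ) ⊆ s := by
  let _ := Preorder.topology X
  induction hs with
  | basic t ht =>
    rcases ht with ⟨u, -, rfl⟩ | ⟨K, -, hK, rfl⟩
    · simp at htop
    · exact ⟨K, hK, Subset.rfl⟩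
  | univ => exact ⟨∅, isCompact_empty, subset_univ _⟩
  | inter t₁ t₂ _ _ ih₁ ih₂ =>
    obtain ⟨K₁, hK₁, hsub₁⟩ := ih₁ htop.1
    obtain ⟨K₂, hK₂, hsub₂⟩ := ih₂ htop.2
    refine ⟨K₁ ∪ K₂, hK₁.union hK₂, subset_inter ?_ ?_⟩
    · refine (insert_subset_insert (image_mono ?_)).trans hsub₁
      exact compl_subset_compl.2 subset_union_left
    · refine (insert_subset_insert (image_mono ?_)).trans hsub₂
      exact compl_subset_compl.2 subset_union_right
  | sUnion S _ ih =>
    obtain ⟨t, htS, htopt⟩ := htop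
    obtain ⟨K, hK, hsub⟩ := ih t htS htopt
    exact ⟨K, hK, hsub.trans (subset_sUnion_of_mem htS)⟩

theorem circleTopology_eq_onePointCompTopology_iff :
    circleTopology X = onePointCompTopology X ↔
      ∀ S : Set X, S.Nonempty → BddAbove S → ∃ x : X, IsLUB S x := by
  let _ := Preorder.topology X
  have : OrderTopology X := ⟨rfl⟩
  rw [← forall_isCompact_Icc_iff_exists_isLUB]
  constructor
  · intro heq a b
    have hopen : IsOpen[onePointCompTopology X] (insert ⊤ ((↑) '' (Icc a b)ᶜ)) :=
      heq ▸ .basic _ (Or.inr ⟨a, b, rfl⟩)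
    obtain ⟨K, hK, hsub⟩ := exists_isCompact_insert_top_subset hopen (mem_insert _ _)
    refine hK.of_isClosed_subset isClosed_Icc fun x hx ↦ by_contra fun hxK ↦ ?_
    simpa [hx.1, not_lt.2 hx.2] using hsub (mem_insert_of_mem _ (mem_image_of_mem _ hxK))
  · intro hIcc
    refine circleTopology_le_onePointCompTopology.antisymm (le_generateFrom ?_)
    rintro s (⟨u, hu, rfl⟩ | ⟨a, b, rfl⟩)
    · exact .basic _ (Or.inl ⟨u, hu, rfl⟩)
    · exact .basic _ (Or.inr ⟨Icc a b, isClosed_Icc, hIcc a b, rfl⟩)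

end OnePointCompactification

theorem stmt9_general {X : Type*} [LinearOrder X] :
    (∀ s : Set (WithTop X), (onePointCompTopology X).IsOpen s → (circleTopology X).IsOpen s) ∧
    (circleTopology X = onePointCompTopology X ↔
      ∀ S : Set X, S.Nonempty → BddAbove S → ∃ x : X, IsLUB S x) :=
  ⟨fun _ ↦ circleTopology_le_onePointCompTopology _, circleTopology_eq_onePointCompTopology_iff⟩

theorem stmt9 {X : Type*} [LinearOrder X] [Nonempty X] :
    (∀ s : Set (WithTop X), (onePointCompTopology X).IsOpen s → (circleTopology X).IsOpen s) ∧
    (circleTopology X = onePointCompTopology X ↔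
      ∀ S : Set X, S.Nonempty → BddAbove S → ∃ x : X, IsLUB S x) :=
  stmt9_general
end

section
/- Let X be a totally ordered set that is not complete, i.e., there is a nonempty subset S of X bounded above without a supremum. Then the circle topology on X_∞ = X ∪ {∞} is not compact. -/
theorem stmt11 {X : Type*} [LinearOrder X] (S : Set X) (hne : S.Nonempty)
    (hbdd : BddAbove S) (hnosup : ¬ ∃ x : X, IsLUB S x) :
    ¬ @CompactSpace (WithTop X) (circleTopology X) := by
  intro hc
  obtain ⟨s₀, hs₀⟩ := hne
  obtain ⟨b₀, hb₀⟩ := hbdd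
  letI := circleTopology X
  set U : (↥S ⊕ ↥(upperBounds S)) → Set (WithTop X) := fun i =>
    match i with
    | Sum.inl s => (↑) '' Set.Iio (s : X)
    | Sum.inr b => insert ⊤ ((↑) '' (Set.Icc s₀ (b : X))ᶜ) with hU
  have hUopen : ∀ i, IsOpen (U i) := by
    rintro (⟨s, hs⟩ | ⟨b, hb⟩)
    · exact TopologicalSpace.GenerateOpen.basic _
        (Or.inl ⟨Set.Iio s, TopologicalSpace.GenerateOpen.basic _ ⟨s, Or.inr rfl⟩, rfl⟩)
    · exact TopologicalSpace.GenerateOpen.basic _ (Or.inr ⟨s₀, b, rfl⟩)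
  have hcover : Set.univ ⊆ ⋃ i, U i := by
    rintro z -
    rcases z with _ | x
    · exact Set.mem_iUnion.2 ⟨Sum.inr ⟨b₀, hb₀⟩, Set.mem_insert _ _⟩
    · by_cases hx : x ∈ upperBounds S
      · have hnl : ¬ x ∈ lowerBounds (upperBounds S) := fun h => hnosup ⟨x, hx, h⟩
        obtain ⟨b, hb, hbx⟩ : ∃ b ∈ upperBounds S, ¬ x ≤ b := by
          simpa [lowerBounds, not_forall] using hnl
        refine Set.mem_iUnion.2 ⟨Sum.inr ⟨b, hb⟩, Set.mem_insert_iff.2 (Or.inr ⟨x, ?_, rfl⟩)⟩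
        exact fun h => hbx h.2
      · obtain ⟨s, hs, hxs⟩ : ∃ s ∈ S, ¬ s ≤ x := by
          simpa [upperBounds, not_forall] using hx
        exact Set.mem_iUnion.2 ⟨Sum.inl ⟨s, hs⟩, ⟨x, lt_of_not_ge hxs, rfl⟩⟩
  obtain ⟨t, ht⟩ := isCompact_univ.elim_finite_subcover U hUopen hcover
  set g : (↥S ⊕ ↥(upperBounds S)) → X := fun i =>
    match i with
    | Sum.inl _ => b₀
    | Sum.inr b => (b : X) with hg
  have hgub : ∀ i, g i ∈ upperBounds S := by
    rintro (s | b)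
    · exact hb₀
    · exact b.2
  -- the finite subcover covers ⊤, so t is nonempty
  obtain ⟨i₀, hi₀t, _⟩ : ∃ i ∈ t, (⊤ : WithTop X) ∈ U i := by
    simpa using ht (Set.mem_univ (⊤ : WithTop X))
  set B : Finset X := t.image g with hB
  have hBne : B.Nonempty := ⟨g i₀, Finset.mem_image.2 ⟨i₀, hi₀t, rfl⟩⟩
  set b : X := B.min' hBne with hbdef
  have hbub : b ∈ upperBounds S := by
    obtain ⟨i, _, hi⟩ := Finset.mem_image.1 (B.min'_mem hBne)
    rw [hbdef, ← hi]; exact hgub i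
  obtain ⟨i, hit, hib⟩ : ∃ i ∈ t, (b : WithTop X) ∈ U i := by
    simpa using ht (Set.mem_univ (b : WithTop X))
  rcases i with ⟨s, hs⟩ | ⟨c, hcub⟩
  · obtain ⟨y, hy, hyeq⟩ := hib
    rw [WithTop.coe_eq_coe] at hyeq
    subst hyeq
    exact absurd (hbub hs) (not_le.2 hy)
  · rcases hib with h | ⟨y, hy, hyeq⟩
    · exact (WithTop.coe_ne_top (a := b)) h
    · rw [WithTop.coe_eq_coe] at hyeq
      subst hyeq
      refine hy ⟨hbub hs₀, ?_⟩
      have : g (Sum.inr ⟨c, hcub⟩) ∈ B := Finset.mem_image.2 ⟨_, hit, rfl⟩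
      exact B.min'_le _ this
end

section
/- Let R be a noetherian local ring with maximal ideal 𝔪, and let W_𝔪 be the set of centered valuations ν : R → ℝ ∪ {∞} normalized by 1, i.e., min{ν(a) : a ∈ 𝔪} = 1. Then W_𝔪 is closed in [0, ∞]^R with the product topology (where [0,∞] carries the order topology), and hence W_𝔪 is compact. -/
open ENNReal

/-- A valuation on a commutative ring `R` with values in `[0, ∞] = ℝ≥0∞`. -/
def IsValuationE {R : Type*} [CommRing R] (f : R → ℝ≥0∞) : Prop :=
  (∀ a b : R, f (a * b) = f a + f b) ∧
  (∀ a b : R, min (f a) (f b) ≤ f (a + b)) ∧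
  f 1 = 0 ∧ f 0 = ⊤

/-!
If `s` is a finite generating set of `𝔪`, the ultrametric inequality shows that the least value
of a valuation `ν` on `𝔪` is `min_{x ∈ s} ν(x)`. So the normalization `ν(𝔪) = 1` is the
equation `s.inf ν = 1`, whose left side depends on finitely many coordinates only and is a
continuous function on `[0, ∞]^R`. The remaining conditions are closed conditions on finitely
many coordinates each, and `[0, ∞]^R` is compact by Tychonoff.
-/

namespace IsValuationE

variable {R : Type*} [CommRing R] {f : R → ℝ≥0∞}

theorem finsetInf_le_of_mem_span (hf : IsValuationE f) (s : Finset R) {a : R}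
    (ha : a ∈ Ideal.span (s : Set R)) : s.inf f ≤ f a := by
  induction ha using Submodule.span_induction with
  | mem x hx => exact Finset.inf_le hx
  | zero => rw [hf.2.2.2]; exact le_top
  | add x y _ _ hx hy => exact (le_min hx hy).trans (hf.2.1 x y)
  | smul r x _ hx => rw [smul_eq_mul, hf.1 r x]; exact hx.trans le_add_self

theorem isLeast_image_span (hf : IsValuationE f) (s : Finset R) :
    IsLeast (f '' (Ideal.span (s : Set R) : Set R)) (s.inf f) := by
  refine ⟨?_, by rintro _ ⟨a, ha, rfl⟩; exact hf.finsetInf_le_of_mem_span s ha⟩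
  rcases s.eq_empty_or_nonempty with rfl | hne
  · exact ⟨0, Submodule.zero_mem _, by rw [hf.2.2.2, Finset.inf_empty]⟩
  · obtain ⟨x, hx, hfx⟩ := s.exists_mem_eq_inf hne f
    exact ⟨x, Ideal.subset_span hx, hfx.symm⟩

end IsValuationE

theorem isClosed_setOf_isValuationE (R : Type*) [CommRing R] :
    IsClosed {f : R → ℝ≥0∞ | IsValuationE f} := by
  simp only [IsValuationE, Set.ofPred_and, Set.ofPred_forall]
  refine ((isClosed_iInter fun a => isClosed_iInter fun b => ?_).inter
    ((isClosed_iInter fun a => isClosed_iInter fun b => ?_).inter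
    ((isClosed_eq (continuous_apply 1) continuous_const).inter
    (isClosed_eq (continuous_apply 0) continuous_const))))
  · exact isClosed_eq (continuous_apply _) ((continuous_apply a).add (continuous_apply b))
  · exact isClosed_le ((continuous_apply a).min (continuous_apply b)) (continuous_apply _)

theorem setOf_isValuationE_normalized_eq {R : Type*} [CommRing R] {I : Ideal R} {s : Finset R}
    (hs : Ideal.span (s : Set R) = I) :
    {f : R → ℝ≥0∞ | IsValuationE f ∧ (∀ a ∈ I, 0 < f a) ∧ IsLeast (f '' (I : Set R)) 1} =
      {f | IsValuationE f ∧ s.inf f = 1} := by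
  subst hs
  ext f
  refine ⟨fun ⟨hf, _, hleast⟩ => ⟨hf, (hf.isLeast_image_span s).unique hleast⟩, ?_⟩
  rintro ⟨hf, hinf⟩
  refine ⟨hf, fun a ha => ?_, hinf ▸ hf.isLeast_image_span s⟩
  exact zero_lt_one.trans_le (hinf ▸ hf.finsetInf_le_of_mem_span s ha)

theorem isClosed_setOf_isValuationE_finsetInf_eq {R : Type*} [CommRing R] (s : Finset R)
    (c : ℝ≥0∞) : IsClosed {f : R → ℝ≥0∞ | IsValuationE f ∧ s.inf f = c} :=
  (isClosed_setOf_isValuationE R).inter <|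
    isClosed_eq (Continuous.finset_inf_apply fun i _ => continuous_apply i) continuous_const

theorem stmt19 {R : Type*} [CommRing R] [IsLocalRing R] [IsNoetherianRing R] :
    IsClosed {f : R → ℝ≥0∞ | IsValuationE f ∧
      (∀ a ∈ IsLocalRing.maximalIdeal R, 0 < f a) ∧
      IsLeast (f '' (IsLocalRing.maximalIdeal R : Set R)) 1} ∧
    IsCompact {f : R → ℝ≥0∞ | IsValuationE f ∧
      (∀ a ∈ IsLocalRing.maximalIdeal R, 0 < f a) ∧
      IsLeast (f '' (IsLocalRing.maximalIdeal R : Set R)) 1} := by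
  obtain ⟨s, hs⟩ := (IsLocalRing.maximalIdeal R).fg_of_isNoetherianRing
  rw [setOf_isValuationE_normalized_eq hs]
  have hclosed := isClosed_setOf_isValuationE_finsetInf_eq s 1
  exact ⟨hclosed, hclosed.isCompact⟩
end
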